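/- arXiv:2005.09570 — 2 statements merged into one kernel-verified Lean document; each statement's English description precedes it below -/
import Mathlib

section
/- Let φ, ψ be structural sets and f a C² function from ℝ³ to ℝ_{0,3} with ω(f) = Σᵢ φⁱ f ψⁱ. Then ψ∂ φ∂[ω(f)] − ω(φ∂ ψ∂ f) = φ∂[ω(ψ∂ f)] − ψ∂[ω(φ∂ f)]. -/
noncomputable section

abbrev V3 : Type := Fin 3 → ℝ

/-- The negative-definite quadratic form on `ℝ³`, so that `CliffordAlgebra Q3 = ℝ_{0,3}`. -/
def Q3 : QuadraticForm ℝ V3 := -(QuadraticMap.weightedSumSquares ℝ (fun _ : Fin 3 => (1:ℝ)))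

/-- The real Clifford algebra `ℝ_{0,3}`. -/
abbrev Cl3 : Type := CliffordAlgebra Q3

namespace Cl3

def bCl : Module.Basis (Module.Free.ChooseBasisIndex ℝ Cl3) ℝ Cl3 := Module.Free.chooseBasis ℝ Cl3

def toLp : Cl3 →ₗ[ℝ] lp (fun _ : Module.Free.ChooseBasisIndex ℝ Cl3 => ℝ) ⊤ where
  toFun x := ⟨fun i => bCl.repr x i, by
    apply memℓp_infty
    have h1 : (Set.range ((bCl.repr x) : _ → ℝ)).Finite := by
      apply Set.Finite.subset (((bCl.repr x).frange : Finset ℝ).finite_toSet.insert 0)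
      rintro y ⟨i, rfl⟩
      by_cases h : (bCl.repr x) i = 0
      · simp [h]
      · exact Set.mem_insert_of_mem _ (by
          simp only [Finset.mem_coe, Finsupp.mem_frange]
          exact ⟨h, i, rfl⟩)
    have h2 : (Set.range fun i => ‖(bCl.repr x) i‖).Finite := by
      have := h1.image norm
      apply this.subset
      rintro y ⟨i, rfl⟩
      exact ⟨(bCl.repr x) i, ⟨i, rfl⟩, rfl⟩
    exact h2.bddAbove⟩
  map_add' x y := by ext i; simp; rfl
  map_smul' c x := by ext i; simp

lemma toLp_injective : Function.Injective toLp := by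
  intro x y h
  apply bCl.repr.injective
  ext i
  exact congrFun (congrArg Subtype.val h) i

instance : NormedAddCommGroup Cl3 := NormedAddCommGroup.induced Cl3 _ toLp toLp_injective
instance : NormedSpace ℝ Cl3 := NormedSpace.induced ℝ Cl3 _ toLp

end Cl3

/-- Embedding of vectors `ℝ³ ⊂ ℝ_{0,3}`. -/
def ι3 : V3 →ₗ[ℝ] Cl3 := CliffordAlgebra.ι Q3

/-- `ψ` is a structural set: `ψⁱψʲ + ψʲψⁱ = -2δᵢⱼ` inside `ℝ_{0,3}`. -/
def StructuralSet (ψ : Fin 3 → V3) : Prop :=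
  ∀ i j, ι3 (ψ i) * ι3 (ψ j) + ι3 (ψ j) * ι3 (ψ i)
      = algebraMap ℝ Cl3 (if i = j then -2 else 0)

/-- Partial derivative `∂f/∂xᵢ`. -/
def pd (i : Fin 3) (f : V3 → Cl3) : V3 → Cl3 := fun x => fderiv ℝ f x (Pi.single i 1)

/-- Left Dirac operator `ψ∂ f = Σᵢ ψⁱ ∂f/∂xᵢ`. -/
def DL (ψ : Fin 3 → V3) (f : V3 → Cl3) : V3 → Cl3 := fun x => ∑ i, ι3 (ψ i) * pd i f x

/-- Right Dirac operator `f ψ∂ = Σᵢ (∂f/∂xᵢ) ψⁱ`. -/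
def DR (ψ : Fin 3 → V3) (f : V3 → Cl3) : V3 → Cl3 := fun x => ∑ i, pd i f x * ι3 (ψ i)

/-- Two-sided operator `φ∂ f ψ∂ = Σᵢⱼ φⁱ (∂²f/∂xᵢ∂xⱼ) ψʲ`. -/
def DLR (φ ψ : Fin 3 → V3) (f : V3 → Cl3) : V3 → Cl3 :=
  fun x => ∑ i, ∑ j, ι3 (φ i) * pd i (pd j f) x * ι3 (ψ j)

/-- Componentwise Laplacian. -/
def lap (f : V3 → Cl3) : V3 → Cl3 := fun x => ∑ i, pd i (pd i f) x

/-- `ν(a) = Σᵢ ψⁱ a ψⁱ`. -/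
def nu (ψ : Fin 3 → V3) (a : Cl3) : Cl3 := ∑ i, ι3 (ψ i) * a * ι3 (ψ i)

/-- `ω(a) = Σᵢ φⁱ a ψⁱ`. -/
def om (φ ψ : Fin 3 → V3) (a : Cl3) : Cl3 := ∑ i, ι3 (φ i) * a * ι3 (ψ i)

/-- `x_ψ = Σᵢ ψⁱ xᵢ`. -/
def xPsi (ψ : Fin 3 → V3) (x : V3) : Cl3 := ∑ i, x i • ι3 (ψ i)

/-! Since `ω` and left multiplications are linear, each of the four terms is a double sum over
the second partials `∂ᵢ∂ⱼf`, which commute for `f ∈ C²`. Termwise the identity then reduces to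
`φʲ ω(a) + ω(φʲ a) = Σₖ (φʲφᵏ + φᵏφʲ) a ψᵏ = -2 a ψʲ`: both sides become `-2 ψⁱ a ψʲ`. -/

instance : FiniteDimensional ℝ Cl3 := by
  have : Invertible (2 : ℝ) := invertibleOfNonzero two_ne_zero
  have : Module.Finite ℝ (ExteriorAlgebra ℝ V3) :=
    .of_basis (Pi.basisFun ℝ (Fin 3)).ExteriorAlgebra
  exact .equiv (CliffordAlgebra.equivExterior Q3).symm

def omLinear (φ ψ : Fin 3 → V3) : Cl3 →ₗ[ℝ] Cl3 :=
  ∑ i, LinearMap.mulLeft ℝ (ι3 (φ i)) ∘ₗ LinearMap.mulRight ℝ (ι3 (ψ i))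

@[simp]
lemma omLinear_apply (φ ψ : Fin 3 → V3) (a : Cl3) : omLinear φ ψ a = om φ ψ a := by
  simp [omLinear, om, LinearMap.sum_apply, mul_assoc]

lemma mul_om_add_om_mul {φ : Fin 3 → V3} (hφ : StructuralSet φ) (ψ : Fin 3 → V3)
    (j : Fin 3) (a : Cl3) :
    ι3 (φ j) * om φ ψ a + om φ ψ (ι3 (φ j) * a) = (-2 : ℝ) • (a * ι3 (ψ j)) := by
  have hterm (k : Fin 3) :
      ι3 (φ j) * (ι3 (φ k) * a * ι3 (ψ k)) + ι3 (φ k) * (ι3 (φ j) * a) * ι3 (ψ k)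
        = (if j = k then (-2 : ℝ) else 0) • (a * ι3 (ψ k)) := by
    rw [Algebra.smul_def, ← hφ j k]
    noncomm_ring
  simp only [om, Finset.mul_sum, ← Finset.sum_add_distrib, hterm, ite_smul, zero_smul,
    Finset.sum_ite_eq, Finset.mem_univ, if_true]

lemma pd_linearMap (T : Cl3 →ₗ[ℝ] Cl3) {g : V3 → Cl3} {x : V3} (hg : DifferentiableAt ℝ g x)
    (i : Fin 3) : pd i (fun y => T (g y)) x = T (pd i g x) := by
  let T' := LinearMap.toContinuousLinearMap T
  change fderiv ℝ (T' ∘ g) x _ = T' _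
  rw [fderiv_comp x T'.differentiableAt hg, ContinuousLinearMap.fderiv]
  rfl

section SecondDerivatives

variable {f : V3 → Cl3}

lemma contDiff_pd (hf : ContDiff ℝ 2 f) (j : Fin 3) : ContDiff ℝ 1 (pd j f) :=
  (hf.fderiv_right (by norm_num)).clm_apply contDiff_const

lemma pd_pd_comm (hf : ContDiff ℝ 2 f) (x : V3) (i j : Fin 3) :
    pd i (pd j f) x = pd j (pd i f) x := by
  have hf' : Differentiable ℝ (fderiv ℝ f) :=
    (hf.fderiv_right (by norm_num)).differentiable one_ne_zero
  have pd_pd (i j : Fin 3) :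
      pd i (pd j f) x = fderiv ℝ (fderiv ℝ f) x (Pi.single i 1) (Pi.single j 1) := by
    unfold pd
    rw [fderiv_clm_apply (hf' x) (differentiableAt_const _)]
    simp
  rw [pd_pd, pd_pd]
  exact hf.contDiffAt.isSymmSndFDerivAt (by simp [minSmoothness_of_isRCLikeNormedField]) _ _

lemma pd_sum_linearMap_pd (hf : ContDiff ℝ 2 f) (T : Fin 3 → Cl3 →ₗ[ℝ] Cl3) (x : V3)
    (i : Fin 3) : pd i (fun y => ∑ j, T j (pd j f y)) x = ∑ j, T j (pd i (pd j f) x) := by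
  have hpd (j : Fin 3) : DifferentiableAt ℝ (pd j f) x :=
    (contDiff_pd hf j).differentiable one_ne_zero x
  have hsum : pd i (fun y => ∑ j, T j (pd j f y)) x = ∑ j, pd i (fun y => T j (pd j f y)) x := by
    change fderiv ℝ (fun y => ∑ j, T j (pd j f y)) x _ = _
    have hT (j : Fin 3) : DifferentiableAt ℝ (fun y => T j (pd j f y)) x :=
      (LinearMap.toContinuousLinearMap (T j)).differentiableAt.comp x (hpd j)
    rw [fderiv_fun_sum fun j _ => hT j]
    simp [pd]
  rw [hsum]
  exact Finset.sum_congr rfl fun j _ => pd_linearMap (T j) (hpd j) i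

lemma DL_sum_linearMap_pd (hf : ContDiff ℝ 2 f) (θ : Fin 3 → V3) (T : Fin 3 → Cl3 →ₗ[ℝ] Cl3)
    (x : V3) :
    DL θ (fun y => ∑ j, T j (pd j f y)) x = ∑ i, ∑ j, ι3 (θ i) * T j (pd i (pd j f) x) := by
  simp only [DL, pd_sum_linearMap_pd hf, Finset.mul_sum]

end SecondDerivatives

theorem stmt10_general (φ ψ : Fin 3 → V3) (hφ : StructuralSet φ)
    (f : V3 → Cl3) (hf : ContDiff ℝ 2 f) :
    ∀ x, DL ψ (DL φ (fun y => om φ ψ (f y))) x - om φ ψ (DL φ (DL ψ f) x) =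
      DL φ (fun y => om φ ψ (DL ψ f y)) x - DL ψ (fun y => om φ ψ (DL φ f y)) x := by
  intro x
  have DL_eq (θ : Fin 3 → V3) :
      DL θ f = fun y => ∑ j, LinearMap.mulLeft ℝ (ι3 (θ j)) (pd j f y) := rfl
  have DL_om_eq : DL φ (fun y => om φ ψ (f y))
      = fun y => ∑ j, (LinearMap.mulLeft ℝ (ι3 (φ j)) ∘ₗ omLinear φ ψ) (pd j f y) := by
    funext y
    simp only [DL, ← omLinear_apply, pd_linearMap _ (hf.differentiable two_ne_zero y),
      LinearMap.comp_apply, LinearMap.mulLeft_apply]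
  have om_DL_eq (θ : Fin 3 → V3) : (fun y => om φ ψ (DL θ f y))
      = fun y => ∑ j, (omLinear φ ψ ∘ₗ LinearMap.mulLeft ℝ (ι3 (θ j))) (pd j f y) := by
    simp only [DL_eq, ← omLinear_apply, map_sum, LinearMap.comp_apply]
  rw [DL_om_eq, om_DL_eq, om_DL_eq, DL_eq, DL_sum_linearMap_pd hf, DL_sum_linearMap_pd hf,
    DL_sum_linearMap_pd hf, DL_sum_linearMap_pd hf, ← omLinear_apply]
  simp only [map_sum, LinearMap.comp_apply, LinearMap.mulLeft_apply, omLinear_apply]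
  rw [sub_eq_sub_iff_add_eq_add]
  simp only [← Finset.sum_add_distrib]
  conv_rhs => rw [Finset.sum_comm]
  refine Finset.sum_congr rfl fun i _ => Finset.sum_congr rfl fun j _ => ?_
  rw [pd_pd_comm hf x j i, ← mul_add, mul_om_add_om_mul hφ, mul_om_add_om_mul hφ,
    mul_smul_comm, mul_assoc]

/-- `ψ∂φ∂[ω(f)] - ω(φ∂ψ∂f) = φ∂[ω(ψ∂f)] - ψ∂[ω(φ∂f)]`. -/
theorem stmt10 (φ ψ : Fin 3 → V3) (hφ : StructuralSet φ) (hψ : StructuralSet ψ)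
    (f : V3 → Cl3) (hf : ContDiff ℝ 2 f) :
    ∀ x, DL ψ (DL φ (fun y => om φ ψ (f y))) x - om φ ψ (DL φ (DL ψ f) x) =
      DL φ (fun y => om φ ψ (DL ψ f y)) x - DL ψ (fun y => om φ ψ (DL φ f y)) x :=
  stmt10_general φ ψ hφ f hf
end
end

section
/- Let α = (μ+λ)/2 and β = (3μ+λ)/2 with μ > 0 and λ > −2μ/3, and let φ, ψ be structural sets. If a C³ vector field u⃗: Ω → ℝ³ ⊂ ℝ_{0,3} on an open set Ω ⊆ ℝ³ satisfies the generalized Lamé–Navier system α(φ∂ u⃗ ψ∂) + β(φ∂ ψ∂ u⃗) = 0 in Ω, then ψ∂ ψ∂ ψ∂ u⃗ = 0 in Ω. -/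
noncomputable section

/-!
Put `A = α (u ψ∂) + β (ψ∂ u)`. The system says `φ∂ A = 0`, hence `ΔA = -φ∂φ∂A = 0`. The Laplacian
commutes with constant-coefficient operators, so `ΔA = αQ + βP` with `P = Σ ψʲmⱼ`, `Q = Σ mⱼψʲ`,
where `mⱼ = Δ∂ⱼu` is again a vector. For vectors `a, b` the map `ν(x) = Σ ψⁱxψⁱ` sends `ab` to
`-ab - 2ba`, so applying `ν` yields the second relation `α(-Q - 2P) + β(-P - 2Q) = 0`. Since
`α² ≠ β²` the two relations give `P = 0`, and `ψ∂ψ∂ψ∂u = -Δ(ψ∂u) = -P = 0`.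
-/

open Filter Topology
open scoped Matrix

open Submodule in
instance ExteriorAlgebra.instModuleFinite {K E : Type*} [Field K] [AddCommGroup E] [Module K E]
    [FiniteDimensional K E] : Module.Finite K (ExteriorAlgebra K E) := by
  let N : Submodule K (ExteriorAlgebra K E) := ⨆ n ∈ Finset.range (Module.finrank K E + 1), ⋀[K]^n E
  have hN : ⊤ ≤ N := by
    rw [← ExteriorAlgebra.ιMulti_span K E, span_le]
    rintro _ ⟨⟨n, v⟩, rfl⟩
    by_cases hn : n ≤ Module.finrank K E
    · exact le_biSup (fun n => ⋀[K]^n E) (Finset.mem_range_succ_iff.mpr hn)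
        (ExteriorAlgebra.ιMulti_range K n ⟨v, rfl⟩)
    · have hv : ¬LinearIndependent K v := fun hv => hn (by simpa using hv.fintype_card_le_finrank)
      simp [AlternatingMap.map_linearDependent _ v hv]
  rw [Module.finite_def, ← top_le_iff.mp hN]
  exact fg_biSup _ _ fun n _ => Module.Finite.iff_fg.mp inferInstance

instance inst_s11 : FiniteDimensional ℝ Cl3 := Module.Finite.equiv (CliffordAlgebra.equivExterior Q3).symm

lemma polar_Q3 (x y : V3) : QuadraticMap.polar Q3 x y = -2 * (x ⬝ᵥ y) := by
  simp only [QuadraticMap.polar, Q3, neg_apply, QuadraticMap.weightedSumSquares_apply,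
    Pi.add_apply, smul_eq_mul, one_mul, Fin.sum_univ_three, dotProduct]
  ring

lemma ι3_mul_ι3_add_swap (a b : V3) :
    ι3 a * ι3 b + ι3 b * ι3 a = algebraMap ℝ Cl3 (QuadraticMap.polar Q3 a b) :=
  CliffordAlgebra.ι_mul_ι_add_swap a b

namespace StructuralSet

variable {ψ : Fin 3 → V3}

lemma polar_eq (hψ : StructuralSet ψ) (i j : Fin 3) :
    QuadraticMap.polar Q3 (ψ i) (ψ j) = if i = j then -2 else 0 :=
  (algebraMap ℝ Cl3).injective (by rw [← ι3_mul_ι3_add_swap, hψ i j])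

lemma ι3_mul_self (hψ : StructuralSet ψ) (i : Fin 3) : ι3 (ψ i) * ι3 (ψ i) = -1 := by
  have h := hψ i i
  rw [if_pos rfl, ← two_smul ℝ, map_neg, map_ofNat] at h
  exact smul_right_injective Cl3 two_ne_zero (h.trans (by norm_num [two_smul]))

lemma mul_transpose_eq_one (hψ : StructuralSet ψ) : Matrix.of ψ * (Matrix.of ψ)ᵀ = 1 := by
  ext i j
  have h := hψ.polar_eq i j
  rw [polar_Q3] at h
  simp only [Matrix.mul_apply, Matrix.of_apply, Matrix.transpose_apply, Matrix.one_apply]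
  split_ifs at h ⊢ <;> simp only [dotProduct] at h <;> linarith

lemma sum_dotProduct_smul (hψ : StructuralSet ψ) (b : V3) : ∑ i, (ψ i ⬝ᵥ b) • ψ i = b := by
  have h := mul_eq_one_comm.mp hψ.mul_transpose_eq_one
  calc ∑ i, (ψ i ⬝ᵥ b) • ψ i = (Matrix.of ψ *ᵥ b) ᵥ* Matrix.of ψ := by
        ext k; simp [Matrix.vecMul, dotProduct, Matrix.mulVec, Finset.sum_apply, mul_comm]
    _ = b := by
        rw [← Matrix.vecMul_transpose, Matrix.vecMul_vecMul, h, Matrix.vecMul_one]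

lemma sum_polar_smul (hψ : StructuralSet ψ) (b : V3) :
    ∑ i, QuadraticMap.polar Q3 (ψ i) b • ι3 (ψ i) = (-2 : ℝ) • ι3 b := by
  simp only [polar_Q3, mul_smul, ← Finset.smul_sum, ← map_smul, ← map_sum, hψ.sum_dotProduct_smul]

lemma nu_ι3 (hψ : StructuralSet ψ) (b : V3) : nu ψ (ι3 b) = ι3 b := by
  have hterm : ∀ i, ι3 (ψ i) * ι3 b * ι3 (ψ i)
      = QuadraticMap.polar Q3 (ψ i) b • ι3 (ψ i) + ι3 b := by
    intro i
    rw [eq_sub_of_add_eq (ι3_mul_ι3_add_swap (ψ i) b), sub_mul, mul_assoc, hψ.ι3_mul_self,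
      Algebra.smul_def]
    simp
  simp only [nu, hterm, Finset.sum_add_distrib, hψ.sum_polar_smul, Finset.sum_const,
    Finset.card_univ, Fintype.card_fin]
  module

lemma nu_ι3_mul_ι3 (hψ : StructuralSet ψ) (a b : V3) :
    nu ψ (ι3 a * ι3 b) = -(ι3 a * ι3 b) - (2 : ℝ) • (ι3 b * ι3 a) := by
  have hterm : ∀ i, ι3 (ψ i) * (ι3 a * ι3 b) * ι3 (ψ i)
      = ι3 b * (QuadraticMap.polar Q3 (ψ i) a • ι3 (ψ i)) - ι3 a * (ι3 (ψ i) * ι3 b * ι3 (ψ i)) := by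
    intro i
    rw [← mul_assoc, eq_sub_of_add_eq (ι3_mul_ι3_add_swap (ψ i) a), Algebra.smul_def,
      ← mul_assoc (ι3 b), ← Algebra.commutes]
    noncomm_ring
  simp only [nu, hterm, Finset.sum_sub_distrib, ← Finset.mul_sum, hψ.sum_polar_smul]
  rw [← nu, hψ.nu_ι3, mul_smul_comm]
  module

lemma sum_mul_mul_of_symm (hψ : StructuralSet ψ) (D : Fin 3 → Fin 3 → Cl3)
    (hD : ∀ i j, D i j = D j i) :
    ∑ i, ∑ j, ι3 (ψ i) * ι3 (ψ j) * D i j = -∑ i, D i i := by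
  have hswap : ∑ i, ∑ j, ι3 (ψ i) * ι3 (ψ j) * D i j = ∑ i, ∑ j, ι3 (ψ j) * ι3 (ψ i) * D i j := by
    rw [Finset.sum_comm]
    simp only [hD]
  refine smul_right_injective Cl3 (two_ne_zero (α := ℝ)) ?_
  calc (2 : ℝ) • ∑ i, ∑ j, ι3 (ψ i) * ι3 (ψ j) * D i j
      = ∑ i, ∑ j, (ι3 (ψ i) * ι3 (ψ j) + ι3 (ψ j) * ι3 (ψ i)) * D i j := by
        rw [two_smul]
        nth_rewrite 2 [hswap]
        simp only [add_mul, Finset.sum_add_distrib]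
    _ = (2 : ℝ) • -∑ i, D i i := by
        simp [hψ _ _, apply_ite, ite_mul, Finset.mul_sum, Algebra.smul_def]

end StructuralSet

namespace Cl3

def mulLeftCLM (c : Cl3) : Cl3 →L[ℝ] Cl3 := LinearMap.toContinuousLinearMap (LinearMap.mulLeft ℝ c)

def mulRightCLM (c : Cl3) : Cl3 →L[ℝ] Cl3 := LinearMap.toContinuousLinearMap (LinearMap.mulRight ℝ c)

@[simp] lemma mulLeftCLM_apply (c a : Cl3) : mulLeftCLM c a = c * a := rfl

@[simp] lemma mulRightCLM_apply (c a : Cl3) : mulRightCLM c a = a * c := rfl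

end Cl3

def diffOp (K : Fin 3 → Cl3 →L[ℝ] Cl3) (F : V3 → Cl3) : V3 → Cl3 := fun x => ∑ j, K j (pd j F x)

lemma DL_eq_diffOp (ψ : Fin 3 → V3) (F : V3 → Cl3) :
    DL ψ F = diffOp (fun j => Cl3.mulLeftCLM (ι3 (ψ j))) F := rfl

section Calculus

variable {F : V3 → Cl3} {x : V3}

lemma pd_congr {G : V3 → Cl3} (i : Fin 3) (h : F =ᶠ[𝓝 x] G) : pd i F x = pd i G x := by
  rw [pd, pd, h.fderiv_eq]

lemma ContDiffAt.pd {m n : WithTop ℕ∞} (h : ContDiffAt ℝ n F x) (hmn : m + 1 ≤ n) (i : Fin 3) :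
    ContDiffAt ℝ m (pd i F) x :=
  (h.fderiv_right hmn).clm_apply contDiffAt_const

lemma pd_sum_clm (K : Fin 3 → Cl3 →L[ℝ] Cl3) {G : Fin 3 → V3 → Cl3}
    (hG : ∀ j, DifferentiableAt ℝ (G j) x) (i : Fin 3) :
    pd i (fun y => ∑ j, K j (G j y)) x = ∑ j, K j (pd i (G j) x) := by
  have hderiv : HasFDerivAt (fun y => ∑ j, K j (G j y)) (∑ j, (K j).comp (fderiv ℝ (G j) x)) x :=
    HasFDerivAt.fun_sum fun j _ => (K j).hasFDerivAt.comp x (hG j).hasFDerivAt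
  simp [pd, hderiv.fderiv]

lemma pd_diffOp (K : Fin 3 → Cl3 →L[ℝ] Cl3) (hF : ContDiffAt ℝ 2 F x) (i : Fin 3) :
    pd i (diffOp K F) x = ∑ j, K j (pd i (pd j F) x) :=
  pd_sum_clm K (fun j => (hF.pd (m := 1) (by norm_num) j).differentiableAt one_ne_zero) i

lemma ContDiffAt.diffOp {m n : WithTop ℕ∞} (K : Fin 3 → Cl3 →L[ℝ] Cl3) (h : ContDiffAt ℝ n F x)
    (hmn : m + 1 ≤ n) : ContDiffAt ℝ m (diffOp K F) x :=
  ContDiffAt.sum fun j _ => (K j).contDiff.contDiffAt.comp x (h.pd hmn j)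

lemma pd_pd_comm_s11 (hF : ContDiffAt ℝ 2 F x) (i j : Fin 3) : pd i (pd j F) x = pd j (pd i F) x := by
  have hsecond : ∀ k l, pd k (pd l F) x = fderiv ℝ (fderiv ℝ F) x (Pi.single k 1) (Pi.single l 1) :=
    fun k l => by
      have hd : DifferentiableAt ℝ (fderiv ℝ F) x :=
        (hF.fderiv_right (m := 1) (by norm_num)).differentiableAt one_ne_zero
      change fderiv ℝ (fun y => fderiv ℝ F y (Pi.single l 1)) x (Pi.single k 1) = _
      simp [fderiv_clm_apply hd (differentiableAt_const _)]
  rw [hsecond, hsecond, (hF.isSymmSndFDerivAt (by simp)).eq]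

lemma lap_diffOp (K : Fin 3 → Cl3 →L[ℝ] Cl3) (hF : ContDiffAt ℝ 3 F x) :
    lap (diffOp K F) x = ∑ j, K j (lap (pd j F) x) := by
  have hnear : ∀ i, pd i (diffOp K F) =ᶠ[𝓝 x] fun y => ∑ j, K j (pd i (pd j F) y) := fun i =>
    (hF.eventually (by simp)).mono fun y hy => pd_diffOp K (hy.of_le (by norm_num)) i
  have hdiff : ∀ i j, DifferentiableAt ℝ (pd i (pd j F)) x := fun i j =>
    ((hF.pd (m := 2) (by norm_num) j).pd (m := 1) (by norm_num) i).differentiableAt one_ne_zero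
  calc lap (diffOp K F) x = ∑ i, ∑ j, K j (pd i (pd i (pd j F)) x) :=
        Finset.sum_congr rfl fun i _ => by rw [pd_congr i (hnear i), pd_sum_clm K (hdiff i) i]
    _ = ∑ j, K j (lap (pd j F) x) := by
        rw [Finset.sum_comm]
        simp only [lap, map_sum]

lemma DL_diffOp (φ : Fin 3 → V3) (K : Fin 3 → Cl3 →L[ℝ] Cl3) (hF : ContDiffAt ℝ 2 F x) :
    DL φ (diffOp K F) x = ∑ i, ∑ j, ι3 (φ i) * K j (pd i (pd j F) x) := by
  simp only [DL, pd_diffOp K hF, Finset.mul_sum]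

lemma DL_DL_eq_neg_lap {ψ : Fin 3 → V3} (hψ : StructuralSet ψ) (hF : ContDiffAt ℝ 2 F x) :
    DL ψ (DL ψ F) x = -lap F x := by
  simp only [DL_eq_diffOp ψ F, DL_diffOp _ _ hF, Cl3.mulLeftCLM_apply, ← mul_assoc]
  exact hψ.sum_mul_mul_of_symm _ (pd_pd_comm_s11 hF)

lemma DL_eq_zero_of_eventuallyEq_zero {ψ : Fin 3 → V3} (h : F =ᶠ[𝓝 x] 0) : DL ψ F x = 0 := by
  simp only [DL, pd_congr _ h]
  simp [pd]

lemma pd_mem {S : Submodule ℝ Cl3} [FiniteDimensional ℝ S] (hF : DifferentiableAt ℝ F x)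
    (hS : ∀ᶠ y in 𝓝 x, F y ∈ S) (i : Fin 3) : pd i F x ∈ S := by
  have hlim := hF.hasFDerivAt.lim (Pi.single i 1 : V3) (c := fun n : ℕ => (n : ℝ))
    (by simpa using tendsto_natCast_atTop_atTop (R := ℝ))
  refine S.closed_of_finiteDimensional.mem_of_tendsto hlim ?_
  have hshift : Tendsto (fun n : ℕ => x + (n : ℝ)⁻¹ • (Pi.single i 1 : V3)) atTop (𝓝 x) := by
    simpa using ((tendsto_inv_atTop_zero.comp (tendsto_natCast_atTop_atTop (R := ℝ))).smul_const
      (Pi.single i 1 : V3)).const_add x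
  filter_upwards [hshift hS] with n hn
  exact S.smul_mem _ (S.sub_mem hn hS.self_of_nhds)

lemma forall_pd_mem {Ω : Set V3} {S : Submodule ℝ Cl3} [FiniteDimensional ℝ S] (hΩ : IsOpen Ω)
    (hF : ∀ y ∈ Ω, DifferentiableAt ℝ F y) (hS : ∀ y ∈ Ω, F y ∈ S) (i : Fin 3) :
    ∀ y ∈ Ω, pd i F y ∈ S := fun y hy =>
  pd_mem (hF y hy) (eventually_of_mem (hΩ.mem_nhds hy) hS) i

lemma lap_pd_mem {Ω : Set V3} {S : Submodule ℝ Cl3} [FiniteDimensional ℝ S] (hΩ : IsOpen Ω)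
    (hF : ∀ y ∈ Ω, ContDiffAt ℝ 3 F y) (hS : ∀ y ∈ Ω, F y ∈ S) (hx : x ∈ Ω) (j : Fin 3) :
    lap (pd j F) x ∈ S := by
  have h1 := forall_pd_mem hΩ (fun y hy => (hF y hy).differentiableAt (by norm_num)) hS j
  have h2 := forall_pd_mem hΩ
    (fun y hy => ((hF y hy).pd (m := 2) (by norm_num) j).differentiableAt (by norm_num)) h1
  refine S.sum_mem fun i _ => forall_pd_mem hΩ (fun y hy => ?_) (h2 i) i x hx
  exact (((hF y hy).pd (m := 2) (by norm_num) j).pd (m := 1) (by norm_num) i).differentiableAt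
    one_ne_zero

end Calculus

/-- `diffOp (lameCoeff α β ψ) F = α (F ψ∂) + β (ψ∂ F)`. -/
def lameCoeff (α β : ℝ) (ψ : Fin 3 → V3) (j : Fin 3) : Cl3 →L[ℝ] Cl3 :=
  α • Cl3.mulRightCLM (ι3 (ψ j)) + β • Cl3.mulLeftCLM (ι3 (ψ j))

lemma DL_diffOp_lameCoeff {F : V3 → Cl3} {x : V3} (φ ψ : Fin 3 → V3) (α β : ℝ)
    (hF : ContDiffAt ℝ 2 F x) :
    DL φ (diffOp (lameCoeff α β ψ) F) x = α • DLR φ ψ F x + β • DL φ (DL ψ F) x := by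
  simp [DL_diffOp _ _ hF, DL_eq_diffOp ψ F, DLR, lameCoeff, mul_add, mul_assoc,
    Finset.sum_add_distrib, Finset.smul_sum]

def nuLinearMap (ψ : Fin 3 → V3) : Cl3 →ₗ[ℝ] Cl3 :=
  ∑ i, LinearMap.mulLeft ℝ (ι3 (ψ i)) ∘ₗ LinearMap.mulRight ℝ (ι3 (ψ i))

lemma nuLinearMap_apply (ψ : Fin 3 → V3) (a : Cl3) : nuLinearMap ψ a = nu ψ a := by
  simp [nuLinearMap, nu, mul_assoc]

lemma StructuralSet.sum_ι3_mul_ι3_eq_zero {ψ : Fin 3 → V3} (hψ : StructuralSet ψ) (m : Fin 3 → V3)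
    {α β : ℝ} (hαβ : α ^ 2 ≠ β ^ 2) (h : ∑ j, lameCoeff α β ψ j (ι3 (m j)) = 0) :
    ∑ j, ι3 (ψ j) * ι3 (m j) = 0 := by
  set P := ∑ j, ι3 (ψ j) * ι3 (m j)
  set Q := ∑ j, ι3 (m j) * ι3 (ψ j)
  have h0 : α • Q + β • P = 0 := by
    rw [← h]
    simp [P, Q, lameCoeff, Finset.sum_add_distrib, Finset.smul_sum]
  have hνP : nuLinearMap ψ P = -P - (2 : ℝ) • Q := by
    simp [P, Q, nuLinearMap_apply, hψ.nu_ι3_mul_ι3, Finset.sum_sub_distrib, Finset.smul_sum]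
  have hνQ : nuLinearMap ψ Q = -Q - (2 : ℝ) • P := by
    simp [P, Q, nuLinearMap_apply, hψ.nu_ι3_mul_ι3, Finset.sum_sub_distrib, Finset.smul_sum]
  have hν : α • (-Q - (2 : ℝ) • P) + β • (-P - (2 : ℝ) • Q) = 0 := by
    rw [← hνP, ← hνQ, ← map_smul, ← map_smul, ← map_add, h0, map_zero]
  have hP : (2 * (β ^ 2 - α ^ 2)) • P = 0 := by
    linear_combination (norm := module) α • hν + (α + 2 * β) • h0
  exact (smul_eq_zero.mp hP).resolve_left (by intro h; apply hαβ; linarith)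

/-- a `C³` solution of the generalized Lamé–Navier system
`α(φ∂ u⃗ ψ∂) + β(φ∂ψ∂ u⃗) = 0` satisfies `ψ∂ψ∂ψ∂ u⃗ = 0`. -/
theorem stmt11 (φ ψ : Fin 3 → V3) (hφ : StructuralSet φ) (hψ : StructuralSet ψ)
    (μ lam : ℝ) (hμ : 0 < μ) (hlam : -(2 * μ) / 3 < lam)
    (α β : ℝ) (hα : α = (μ + lam) / 2) (hβ : β = (3 * μ + lam) / 2)
    (Ω : Set V3) (hΩ : IsOpen Ω) (u : V3 → V3)
    (hu : ContDiffOn ℝ 3 (fun y => ι3 (u y)) Ω)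
    (hL : ∀ x ∈ Ω, α • DLR φ ψ (fun y => ι3 (u y)) x
        + β • DL φ (DL ψ (fun y => ι3 (u y))) x = 0) :
    ∀ x ∈ Ω, DL ψ (DL ψ (DL ψ (fun y => ι3 (u y)))) x = 0 := by
  intro x hx
  set f : V3 → Cl3 := fun y => ι3 (u y)
  have hf : ∀ y ∈ Ω, ContDiffAt ℝ 3 f y := fun y hy => hu.contDiffAt (hΩ.mem_nhds hy)
  have hαβ : α ^ 2 ≠ β ^ 2 := by
    rw [hα, hβ]
    intro h
    nlinarith
  have hA : DL φ (diffOp (lameCoeff α β ψ) f) =ᶠ[𝓝 x] 0 := by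
    filter_upwards [hΩ.mem_nhds hx] with y hy
    rw [DL_diffOp_lameCoeff _ _ _ _ ((hf y hy).of_le (by norm_num)), hL y hy, Pi.zero_apply]
  have hlapA : lap (diffOp (lameCoeff α β ψ) f) x = 0 := by
    rw [← neg_eq_zero, ← DL_DL_eq_neg_lap hφ ((hf x hx).diffOp _ (by norm_num)),
      DL_eq_zero_of_eventuallyEq_zero hA]
  choose m hm using lap_pd_mem (S := LinearMap.range ι3) hΩ hf (fun y _ => ⟨u y, rfl⟩) hx
  have hP := hψ.sum_ι3_mul_ι3_eq_zero m hαβ (by simpa [lap_diffOp _ (hf x hx), hm] using hlapA)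
  rw [DL_eq_diffOp ψ f, DL_DL_eq_neg_lap hψ ((hf x hx).diffOp (m := 2) _ (by norm_num)),
    lap_diffOp _ (hf x hx)]
  simp [← hm, hP]
end
end
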